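/- Let w be a continuously differentiable real-valued function on Ω that vanishes on the plane {z = 0}. Then for every z ∈ [0,1], ⨍_{[0,l_x]×[0,l_y]} w(x,y,z)² dx dy ≤ 4 z · ⨍_Ω |∂_z w|², where ⨍ denotes the average (integral divided by the measure of the integration domain). -/

import Mathlib

open MeasureTheory Set

/-!
Since `w` vanishes on `{z = 0}`, the fundamental theorem of calculus in the vertical variable gives
`w(x, y, z) = ∫₀^z ∂_z w(x, y, t) dt`, so by Cauchy–Schwarz
`w(x, y, z)² ≤ z ∫₀^z |∂_z w|² ≤ z ∫₀^1 |∂_z w(x, y, t)|² dt`.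
Integrating over the horizontal rectangle and applying Fubini gives the bound with constant `1`,
a fortiori with `4`.
-/
theorem sq_integral_le_measureReal_mul_integral_sq {α : Type*} [MeasurableSpace α]
    {μ : Measure α} [IsFiniteMeasure μ] {g : α → ℝ} (hg : Integrable g μ)
    (hg2 : Integrable (fun x => g x ^ 2) μ) :
    (∫ x, g x ∂μ) ^ 2 ≤ μ.real univ * ∫ x, g x ^ 2 ∂μ := by
  -- `c ↦ ∫ (g - c)²` is a nonnegative quadratic, so its discriminant is nonpositive.
  have hquad (c : ℝ) :
      0 ≤ μ.real univ * (c * c) + (-2 * ∫ x, g x ∂μ) * c + ∫ x, g x ^ 2 ∂μ := by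
    have h (x : α) : (g x - c) ^ 2 = g x ^ 2 + -2 * c * g x + c * c := by ring
    have hlin : Integrable (fun x => g x ^ 2 + -2 * c * g x) μ := hg2.add (hg.const_mul _)
    have hnonneg : 0 ≤ ∫ x, (g x - c) ^ 2 ∂μ := integral_nonneg fun x => sq_nonneg _
    rw [funext h, integral_add hlin (integrable_const _), integral_add hg2 (hg.const_mul _),
      integral_const_mul, integral_const, smul_eq_mul] at hnonneg
    linarith
  have hdisc := discrim_le_zero hquad
  rw [discrim] at hdisc
  linarith

theorem sq_sub_le_mul_integral_deriv_sq {f : ℝ → ℝ} (hf : ContDiff ℝ 1 f) {a b : ℝ}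
    (hab : a ≤ b) : (f b - f a) ^ 2 ≤ (b - a) * ∫ t in Icc a b, deriv f t ^ 2 := by
  have hf' : Continuous (deriv f) := hf.continuous_deriv le_rfl
  have hftc : ∫ t in Icc a b, deriv f t = f b - f a := by
    rw [integral_Icc_eq_integral_Ioc, ← intervalIntegral.integral_of_le hab,
      intervalIntegral.integral_deriv_eq_sub
        (fun t _ => (hf.differentiable one_ne_zero).differentiableAt) (hf'.intervalIntegrable a b)]
  have hvol : (volume.restrict (Icc a b)).real univ = b - a := by
    simp [hab]
  have : IsFiniteMeasure (volume.restrict (Icc a b)) := isFiniteMeasure_restrict.mpr (by simp)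
  rw [← hftc, ← hvol]
  exact sq_integral_le_measureReal_mul_integral_sq hf'.integrableOn_Icc (hf'.pow 2).integrableOn_Icc

theorem continuous_deriv_comp_prodMk {w : ℝ × ℝ × ℝ → ℝ} (hw : ContDiff ℝ 1 w) :
    Continuous fun p : ℝ × ℝ × ℝ => deriv (fun t => w (p.1, p.2.1, t)) p.2.2 := by
  have hchain (p : ℝ × ℝ × ℝ) :
      deriv (fun t => w (p.1, p.2.1, t)) p.2.2 = fderiv ℝ w p (0, 0, 1) := by
    have hline : HasDerivAt (fun t : ℝ => ((p.1, p.2.1, t) : ℝ × ℝ × ℝ)) (0, 0, 1) p.2.2 :=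
      (hasDerivAt_const _ _).prodMk ((hasDerivAt_const _ _).prodMk (hasDerivAt_id _))
    exact ((hw.differentiable one_ne_zero p).hasFDerivAt.comp_hasDerivAt p.2.2 hline).deriv
  simp only [hchain]
  exact (hw.continuous_fderiv one_ne_zero).clm_apply continuous_const

theorem setIntegral_prod_assoc {α β γ E : Type*}
    [MeasureSpace α] [MeasureSpace β] [MeasureSpace γ]
    [SigmaFinite (volume : Measure α)] [SigmaFinite (volume : Measure β)]
    [SigmaFinite (volume : Measure γ)] [NormedAddCommGroup E] [NormedSpace ℝ E]
    {f : α × β × γ → E} {s : Set α} {t : Set β} {u : Set γ}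
    (hf : IntegrableOn f (s ×ˢ t ×ˢ u)) :
    ∫ p in s ×ˢ t ×ˢ u, f p = ∫ q in s ×ˢ t, ∫ r in u, f (q.1, q.2, r) := by
  have hpre : MeasurableEquiv.prodAssoc ⁻¹' (s ×ˢ t ×ˢ u) = (s ×ˢ t) ×ˢ u := by
    ext; simp [MeasurableEquiv.prodAssoc, and_assoc]
  have hassoc :=
    (volume_preserving_prodAssoc (α₁ := α) (β₁ := β) (γ₁ := γ)).restrict_preimage_emb
      MeasurableEquiv.prodAssoc.measurableEmbedding (s ×ˢ t ×ˢ u)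
  rw [hpre] at hassoc
  rw [← hassoc.integral_comp MeasurableEquiv.prodAssoc.measurableEmbedding, Measure.volume_eq_prod]
  exact setIntegral_prod _ (hassoc.integrable_comp_of_integrable hf)

theorem sq_le_mul_setIntegral_deriv_sq {f : ℝ → ℝ} (hf : ContDiff ℝ 1 f) (h0 : f 0 = 0)
    {z b : ℝ} (hz : 0 ≤ z) (hzb : z ≤ b) : f z ^ 2 ≤ z * ∫ t in Icc 0 b, deriv f t ^ 2 := by
  have hsq : Continuous fun t => deriv f t ^ 2 := (hf.continuous_deriv le_rfl).pow 2
  calc f z ^ 2 = (f z - f 0) ^ 2 := by rw [h0, sub_zero]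
    _ ≤ (z - 0) * ∫ t in Icc 0 z, deriv f t ^ 2 := sq_sub_le_mul_integral_deriv_sq hf hz
    _ ≤ z * ∫ t in Icc 0 b, deriv f t ^ 2 := by
      rw [sub_zero]
      gcongr ?_ * ?_
      exact setIntegral_mono_set hsq.integrableOn_Icc (.of_forall fun t => sq_nonneg _)
        (Icc_subset_Icc le_rfl hzb).eventuallyLE

theorem setIntegral_sq_le_mul_setIntegral_deriv_sq {w : ℝ × ℝ × ℝ → ℝ} (hw : ContDiff ℝ 1 w)
    (hw0 : ∀ x y : ℝ, w (x, y, 0) = 0) {s t : Set ℝ} (hs : IsCompact s) (ht : IsCompact t)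
    {z b : ℝ} (hz : 0 ≤ z) (hzb : z ≤ b) :
    ∫ q in s ×ˢ t, w (q.1, q.2, z) ^ 2
      ≤ z * ∫ p in s ×ˢ t ×ˢ Icc 0 b, deriv (fun r => w (p.1, p.2.1, r)) p.2.2 ^ 2 := by
  set D : ℝ × ℝ × ℝ → ℝ := fun p => deriv (fun r => w (p.1, p.2.1, r)) p.2.2
  have hD : Continuous D := continuous_deriv_comp_prodMk hw
  have hpoint (q : ℝ × ℝ) : w (q.1, q.2, z) ^ 2 ≤ z * ∫ r in Icc 0 b, D (q.1, q.2, r) ^ 2 :=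
    sq_le_mul_setIntegral_deriv_sq (f := fun r => w (q.1, q.2, r))
      (hw.comp (contDiff_const.prodMk (contDiff_const.prodMk contDiff_id))) (hw0 _ _) hz hzb
  have hslices : Continuous fun q : ℝ × ℝ => z * ∫ r in Icc 0 b, D (q.1, q.2, r) ^ 2 :=
    (continuous_parametric_integral_of_continuous (μ := volume) (by fun_prop)
      isCompact_Icc).const_mul z
  rw [setIntegral_prod_assoc (f := fun p => D p ^ 2) ((hD.pow 2).continuousOn.integrableOn_compact
    (hs.prod (ht.prod isCompact_Icc))), ← integral_const_mul]
  exact setIntegral_mono_on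
    ((hw.continuous.comp (by fun_prop)).pow 2 |>.continuousOn.integrableOn_compact (hs.prod ht))
    (hslices.continuousOn.integrableOn_compact (hs.prod ht))
    (hs.measurableSet.prod ht.measurableSet) fun q _ => hpoint q

/-- Square-root growth estimate (eq. (2.8)): for `w` continuously differentiable on
`Ω = [0,l_x] × [0,l_y] × [0,1]` vanishing on `{z = 0}`, the horizontal average of `w²`
at height `z` is at most `4 z · ⨍_Ω |∂_z w|²`. -/
theorem stmt1 (lx ly : ℝ) (hlx : 0 < lx) (hly : 0 < ly)
    (w : ℝ × ℝ × ℝ → ℝ)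
    (hw : ContDiff ℝ 1 w)
    (hw0 : ∀ x y : ℝ, w (x, y, 0) = 0)
    (z : ℝ) (hz : z ∈ Set.Icc (0:ℝ) 1) :
    (lx * ly)⁻¹ * ∫ p in Set.Icc 0 lx ×ˢ Set.Icc 0 ly, (w (p.1, p.2, z)) ^ 2
      ≤ 4 * z * ((lx * ly)⁻¹ * ∫ p in Set.Icc 0 lx ×ˢ Set.Icc 0 ly ×ˢ Set.Icc (0:ℝ) 1,
            (deriv (fun t => w (p.1, p.2.1, t)) p.2.2) ^ 2) := by
  set I := ∫ p in Icc 0 lx ×ˢ Icc 0 ly ×ˢ Icc (0:ℝ) 1,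
    deriv (fun t => w (p.1, p.2.1, t)) p.2.2 ^ 2
  have hbound := setIntegral_sq_le_mul_setIntegral_deriv_sq hw hw0
    isCompact_Icc isCompact_Icc hz.1 hz.2 (s := Icc 0 lx) (t := Icc 0 ly)
  have hI : 0 ≤ I :=
    setIntegral_nonneg (measurableSet_Icc.prod (measurableSet_Icc.prod measurableSet_Icc))
      fun _ _ => sq_nonneg _
  have hinv : 0 ≤ (lx * ly)⁻¹ := by positivity
  calc (lx * ly)⁻¹ * ∫ q in Icc 0 lx ×ˢ Icc 0 ly, w (q.1, q.2, z) ^ 2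
      ≤ (lx * ly)⁻¹ * (z * I) := by gcongr
    _ ≤ 4 * z * ((lx * ly)⁻¹ * I) := by nlinarith [mul_nonneg hinv hI, hz.1]
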